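/- arXiv:1905.06859 — 2 statements merged into one kernel-verified Lean document; each statement's English description precedes it below -/
import Mathlib

section
/- (Higman pair detector) In the radicalization setting, fix any x ∈ G* with x ∉ G₀*. Then the following are equivalent: (a) the radicalization (G̃*, H) of (G*, G₀*, α) is a Higman pair; (b) every ξ ∈ G₀* for which x·ξ·x⁻¹ ∈ G₀* satisfies α(x·ξ·x⁻¹) = α(ξ). -/
noncomputable section

/-- The subgroup of `r`-th roots of unity in `ℂˣ`. -/
def rou (r : ℕ) : Subgroup ℂˣ where
  carrier := {z | z ^ r = 1}
  one_mem' := one_pow r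
  mul_mem' := by
    intro a b ha hb
    simp only [Set.mem_setOf_eq] at *
    rw [mul_pow, ha, hb, one_mul]
  inv_mem' := by
    intro a ha
    simp only [Set.mem_setOf_eq] at *
    rw [inv_pow, ha, inv_one]

/-- The left-translation action of `G` on the cosets `G ⧸ K` is doubly transitive. -/
def DTCosets {G : Type*} [Group G] (K : Subgroup G) : Prop :=
  ∀ a b c e : G ⧸ K, a ≠ b → c ≠ e → ∃ g : G, g • a = c ∧ g • b = e

/-- The double coset `H b H`, as a set. -/
def dcoset {G : Type*} [Group G] (H : Subgroup G) (b : G) : Set G :=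
  {g | ∃ h₁ ∈ H, ∃ h₂ ∈ H, g = h₁ * b * h₂}

/-- `b` is a key for the pair `(G, H)`. -/
def IsKey {G : Type*} [Group G] (H : Subgroup G) (b : G) : Prop :=
  b ∉ Subgroup.normalizer (H : Set G) ∧
  DTCosets (Subgroup.normalizer (H : Set G)) ∧
  (∀ a ∈ Subgroup.normalizer (H : Set G), ∀ a' ∈ Subgroup.normalizer (H : Set G), a * a' * a⁻¹ * a'⁻¹ ∈ H) ∧
  dcoset H b = dcoset H b⁻¹ ∧
  (∀ a ∈ Subgroup.normalizer (H : Set G), a * b * a⁻¹ ∈ dcoset H b) ∧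
  (∀ a ∈ Subgroup.normalizer (H : Set G), a * b ∈ dcoset H b → a ∈ H)

/-- `(G, H)` is a Higman pair: `H` is a proper subgroup and there exists a key. -/
def IsHigmanPair {G : Type*} [Group G] (H : Subgroup G) : Prop :=
  H ≠ ⊤ ∧ ∃ b : G, IsKey H b

variable {Gs : Type*} [Group Gs]

/-- The subgroup `G̃₀* = G₀* × μ_r` of `G̃* = G* × μ_r`. -/
def radTilde (G₀ : Subgroup Gs) (r : ℕ) : Subgroup (Gs × rou r) :=
  G₀.prod ⊤

/-- The character `α̃(x, z) = α(x) · z` on `G̃₀* = G₀* × μ_r`. -/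
def alphaTilde (G₀ : Subgroup Gs) (α : G₀ →* ℂˣ) (r : ℕ) :
    ↥(radTilde G₀ r) →* ℂˣ where
  toFun p := α ⟨p.1.1, p.2.1⟩ * (p.1.2 : ℂˣ)
  map_one' := by
    show α ⟨1, _⟩ * _ = 1
    rw [show (⟨1, (radTilde G₀ r).one_mem.1⟩ : G₀) = 1 from rfl, map_one, one_mul]
    rfl
  map_mul' p q := by
    obtain ⟨⟨a, z⟩, ha, -⟩ := p
    obtain ⟨⟨b, w⟩, hb, -⟩ := q
    show α ⟨a * b, mul_mem ha hb⟩ * ((z * w : rou r) : ℂˣ)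
      = (α ⟨a, ha⟩ * z) * (α ⟨b, hb⟩ * w)
    rw [show (⟨a * b, mul_mem ha hb⟩ : G₀) = ⟨a, ha⟩ * ⟨b, hb⟩ from rfl, map_mul]
    push_cast
    exact mul_mul_mul_comm _ _ _ _

/-- The subgroup `H = ker α̃` of `G̃* = G* × μ_r`; the pair `(G* × μ_r, H)` is the
radicalization of `(G*, G₀*, α)`. -/
def radH (G₀ : Subgroup Gs) (α : G₀ →* ℂˣ) (r : ℕ) : Subgroup (Gs × rou r) :=
  ((alphaTilde G₀ α r).ker).map (radTilde G₀ r).subtype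

namespace HPD

variable (G₀ : Subgroup Gs) (α : ↥G₀ →* ℂˣ)

open Classical in
/-- Global extension of `α` by `1`. -/
def beta (g : Gs) : ℂˣ := if h : g ∈ G₀ then α ⟨g, h⟩ else 1

variable {G₀ α}

lemma beta_eq {g : Gs} (h : g ∈ G₀) : beta G₀ α g = α ⟨g, h⟩ := dif_pos h

lemma beta_mul {a b : Gs} (ha : a ∈ G₀) (hb : b ∈ G₀) :
    beta G₀ α (a * b) = beta G₀ α a * beta G₀ α b := by
  rw [beta_eq (mul_mem ha hb), beta_eq ha, beta_eq hb, ← map_mul]; rfl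

lemma beta_inv {a : Gs} (ha : a ∈ G₀) : beta G₀ α a⁻¹ = (beta G₀ α a)⁻¹ := by
  rw [beta_eq (inv_mem ha), beta_eq ha, ← map_inv]; rfl

lemma beta_one : beta G₀ α (1 : Gs) = 1 := by
  rw [beta_eq (one_mem G₀), show (⟨1, one_mem G₀⟩ : G₀) = 1 from rfl, map_one]

lemma beta_conj {a b : Gs} (ha : a ∈ G₀) (hb : b ∈ G₀) :
    beta G₀ α (a * b * a⁻¹) = beta G₀ α b := by
  rw [beta_mul (mul_mem ha hb) (inv_mem ha), beta_mul ha hb, beta_inv ha]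
  exact mul_inv_cancel_comm _ _

variable {r : ℕ}

lemma mem_radH {p : Gs × rou r} :
    p ∈ radH G₀ α r ↔ ∃ _ : p.1 ∈ G₀, beta G₀ α p.1 * (p.2 : ℂˣ) = 1 := by
  constructor
  · rintro ⟨q, hq, rfl⟩
    have h1 : ((radTilde G₀ r).subtype q).1 ∈ G₀ := q.2.1
    refine ⟨h1, ?_⟩
    rw [beta_eq h1]
    exact hq
  · rintro ⟨h1, h2⟩
    refine ⟨⟨p, ⟨h1, trivial⟩⟩, ?_, rfl⟩
    show α ⟨p.1, h1⟩ * (p.2 : ℂˣ) = 1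
    rwa [← beta_eq h1]

lemma exists_third [Finite Gs] (hidx : 3 ≤ G₀.index) (a b : Gs ⧸ G₀) :
    ∃ c : Gs ⧸ G₀, c ≠ a ∧ c ≠ b := by
  by_contra hcon
  push_neg at hcon
  haveI : Finite (Gs ⧸ G₀) := Quotient.finite _
  haveI := Fintype.ofFinite (Gs ⧸ G₀)
  haveI := Classical.decEq (Gs ⧸ G₀)
  have h1 : (Finset.univ : Finset (Gs ⧸ G₀)) ⊆ {a, b} := by
    intro c _
    by_cases h : c = a
    · simp [h]
    · simp [hcon c h]
  have h2 := Finset.card_le_card h1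
  rw [Finset.card_univ] at h2
  have h3 : ({a, b} : Finset (Gs ⧸ G₀)).card ≤ 2 :=
    (Finset.card_insert_le _ _).trans (by simp)
  have h4 : G₀.index = Fintype.card (Gs ⧸ G₀) := by
    rw [Subgroup.index, Nat.card_eq_fintype_card]
  omega
  
lemma normalizer_G₀ [Finite Gs] (hidx : 3 ≤ G₀.index) (hdt : DTCosets G₀) :
    Subgroup.normalizer (G₀ : Set Gs) = G₀ := by
  refine le_antisymm ?_ Subgroup.le_normalizer
  intro n hn
  by_contra hnG
  have hne : ((1 : Gs) : Gs ⧸ G₀) ≠ (n : Gs ⧸ G₀) := by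
    intro h
    rw [QuotientGroup.eq] at h
    simp at h
    exact hnG h
  obtain ⟨c, hc1, hcn⟩ := exists_third hidx ((1 : Gs) : Gs ⧸ G₀) (n : Gs ⧸ G₀)
  obtain ⟨g, hg1, hgn⟩ := hdt _ _ _ _ hne hc1.symm
  have hgG₀ : g ∈ G₀ := by
    have : ((g * 1 : Gs) : Gs ⧸ G₀) = ((1:Gs) : Gs ⧸ G₀) := hg1
    rw [QuotientGroup.eq] at this
    simpa using this
  have : ((g * n : Gs) : Gs ⧸ G₀) = (n : Gs ⧸ G₀) := by
    rw [QuotientGroup.eq]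
    have := (Subgroup.mem_normalizer_iff.mp (inv_mem hn) (g⁻¹)).mp (inv_mem hgG₀)
    simpa [mul_assoc] using this
  have hgn' : ((g * n : Gs) : Gs ⧸ G₀) = c := hgn
  rw [this] at hgn'
  exact hcn.symm hgn'

lemma beta_pow (hr : ∀ ξ : G₀, (α ξ) ^ r = 1) (g : Gs) : beta G₀ α g ^ r = 1 := by
  by_cases h : g ∈ G₀
  · rw [beta_eq h]; exact hr _
  · rw [beta, dif_neg h, one_pow]

/-- The canonical element `(ξ, α(ξ)⁻¹)` of `H`. -/
def hel (hr : ∀ ξ : G₀, (α ξ) ^ r = 1) {ξ : Gs} (hξ : ξ ∈ G₀) : Gs × rou r :=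
  (ξ, ⟨(beta G₀ α ξ)⁻¹, by
    have : ((beta G₀ α ξ)⁻¹) ^ r = 1 := by rw [inv_pow, beta_pow hr, inv_one]
    exact this⟩)

lemma hel_mem (hr : ∀ ξ : G₀, (α ξ) ^ r = 1) {ξ : Gs} (hξ : ξ ∈ G₀) :
    hel hr hξ ∈ radH G₀ α r :=
  mem_radH.mpr ⟨hξ, mul_inv_cancel _⟩

lemma conj_mem_iff {a g : Gs} (ha : a ∈ G₀) : a * g * a⁻¹ ∈ G₀ ↔ g ∈ G₀ := by
  constructor
  · intro h
    have := mul_mem (mul_mem (inv_mem ha) h) ha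
    simpa [mul_assoc] using this
  · intro h
    exact mul_mem (mul_mem ha h) (inv_mem ha)

lemma normalizer_radH [Finite Gs] (hidx : 3 ≤ G₀.index) (hdt : DTCosets G₀)
    (hr : ∀ ξ : G₀, (α ξ) ^ r = 1) :
    Subgroup.normalizer (radH G₀ α r : Set (Gs × rou r)) = radTilde G₀ r := by
  apply le_antisymm
  · intro p hp
    refine Subgroup.mem_prod.mpr ⟨?_, trivial⟩
    rw [← normalizer_G₀ hidx hdt]
    have key : ∀ ξ ∈ (G₀ : Set Gs), p.1 * ξ * p.1⁻¹ ∈ (G₀ : Set Gs) := by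
      intro ξ hξ
      have hq := hel_mem (α := α) hr hξ
      have h2 := (Subgroup.mem_normalizer_iff.mp hp _).mp hq
      obtain ⟨h, -⟩ := mem_radH.mp h2
      exact h
    exact Subgroup.mem_normalizer_fintype key
  · intro p hp
    obtain ⟨hp1, -⟩ := Subgroup.mem_prod.mp hp
    rw [Subgroup.mem_normalizer_iff]
    intro q
    rw [mem_radH, mem_radH]
    have hfst : (p * q * p⁻¹).1 = p.1 * q.1 * p.1⁻¹ := rfl
    have hsnd : ((p * q * p⁻¹).2 : ℂˣ) = (q.2 : ℂˣ) := by
      push_cast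
      exact mul_inv_cancel_comm _ _
    constructor
    · rintro ⟨h1, h2⟩
      refine ⟨hfst ▸ (conj_mem_iff hp1).mpr h1, ?_⟩
      rw [hfst, hsnd, beta_conj hp1 h1, h2]
    · rintro ⟨h1, h2⟩
      have hq1 : q.1 ∈ G₀ := (conj_mem_iff hp1).mp (hfst ▸ h1)
      refine ⟨hq1, ?_⟩
      rw [hsnd, hfst, beta_conj hp1 hq1] at h2
      exact h2

/-- The natural map `(G̃ ⧸ K̃) → (G ⧸ G₀)`. -/
def qmap (G₀ : Subgroup Gs) (r : ℕ) :
    (Gs × rou r) ⧸ (radTilde G₀ r) → Gs ⧸ G₀ :=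
  Quotient.map' Prod.fst (by
    intro a b h
    rw [QuotientGroup.leftRel_apply] at h
    rw [QuotientGroup.leftRel_apply]
    exact (Subgroup.mem_prod.mp h).1)

lemma qmap_mk (p : Gs × rou r) :
    qmap G₀ r (QuotientGroup.mk p) = QuotientGroup.mk p.1 := rfl

lemma qmap_inj : Function.Injective (qmap G₀ r) := by
  intro a b
  induction a using Quotient.inductionOn'
  induction b using Quotient.inductionOn'
  rename_i p q
  intro h
  have h' : (QuotientGroup.mk p.1 : Gs ⧸ G₀) = QuotientGroup.mk q.1 := h
  rw [QuotientGroup.eq] at h'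
  apply Quotient.sound'
  rw [QuotientGroup.leftRel_apply]
  exact Subgroup.mem_prod.mpr ⟨h', trivial⟩

lemma qmap_smul (g : Gs × rou r) (a : (Gs × rou r) ⧸ (radTilde G₀ r)) :
    qmap G₀ r (g • a) = g.1 • qmap G₀ r a := by
  induction a using Quotient.inductionOn'
  rfl

lemma dt_tilde (hdt : DTCosets G₀) : DTCosets (radTilde G₀ r) := by
  intro a b c e hab hce
  obtain ⟨g, hg1, hg2⟩ := hdt (qmap G₀ r a) (qmap G₀ r b) (qmap G₀ r c) (qmap G₀ r e)
    (fun h => hab (qmap_inj h)) (fun h => hce (qmap_inj h))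
  refine ⟨(g, 1), qmap_inj ?_, qmap_inj ?_⟩
  · rw [qmap_smul]; exact hg1
  · rw [qmap_smul]; exact hg2

lemma decomp (hdt : DTCosets G₀) {x g : Gs} (hx : x ∉ G₀) (hg : g ∉ G₀) :
    ∃ s t, s ∈ G₀ ∧ t ∈ G₀ ∧ g = s * x * t := by
  have h1 : ((1 : Gs) : Gs ⧸ G₀) ≠ (x : Gs ⧸ G₀) := by
    intro h; rw [QuotientGroup.eq] at h; simp at h; exact hx h
  have h2 : ((1 : Gs) : Gs ⧸ G₀) ≠ (g : Gs ⧸ G₀) := by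
    intro h; rw [QuotientGroup.eq] at h; simp at h; exact hg h
  obtain ⟨s, hs1, hs2⟩ := hdt _ _ _ _ h1 h2
  have hsG : s ∈ G₀ := by
    have : ((s * 1 : Gs) : Gs ⧸ G₀) = ((1 : Gs) : Gs ⧸ G₀) := hs1
    rw [QuotientGroup.eq] at this; simpa using this
  have hsx : ((s * x : Gs) : Gs ⧸ G₀) = (g : Gs ⧸ G₀) := hs2
  rw [QuotientGroup.eq] at hsx
  refine ⟨s, (s * x)⁻¹ * g, hsG, hsx, by group⟩

lemma mem_dcoset_iff (hr : ∀ ξ : G₀, (α ξ) ^ r = 1) {g : Gs} {w : rou r}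
    {p : Gs × rou r} :
    p ∈ dcoset (radH G₀ α r) (g, w) ↔
      ∃ ξ η, ∃ _ : ξ ∈ G₀, ∃ _ : η ∈ G₀, p.1 = ξ * g * η ∧
        (p.2 : ℂˣ) = (beta G₀ α ξ)⁻¹ * w * (beta G₀ α η)⁻¹ := by
  constructor
  · rintro ⟨h₁, hh₁, h₂, hh₂, rfl⟩
    obtain ⟨m₁, e₁⟩ := mem_radH.mp hh₁
    obtain ⟨m₂, e₂⟩ := mem_radH.mp hh₂
    refine ⟨h₁.1, h₂.1, m₁, m₂, rfl, ?_⟩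
    have e₁' : (h₁.2 : ℂˣ) = (beta G₀ α h₁.1)⁻¹ := by
      rw [eq_inv_iff_mul_eq_one, mul_comm]; exact e₁
    have e₂' : (h₂.2 : ℂˣ) = (beta G₀ α h₂.1)⁻¹ := by
      rw [eq_inv_iff_mul_eq_one, mul_comm]; exact e₂
    show ((h₁.2 * w * h₂.2 : rou r) : ℂˣ) = _
    push_cast
    rw [e₁', e₂']
  · rintro ⟨ξ, η, hξ, hη, hp1, hp2⟩
    refine ⟨hel hr hξ, hel_mem hr hξ, hel hr hη, hel_mem hr hη, ?_⟩
    apply Prod.ext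
    · exact hp1
    · apply Subtype.ext
      show (p.2 : ℂˣ) = (((beta G₀ α ξ)⁻¹ : ℂˣ) * w * (beta G₀ α η)⁻¹ : ℂˣ)
      exact hp2

lemma unit_eq {a b : ℂˣ} (h : (a : ℂ) = (b : ℂ)) : a = b := Units.ext h

lemma dcoset_eq_of_mem {G : Type*} [Group G] {H : Subgroup G} {b b' : G}
    (h : b' ∈ dcoset H b) : dcoset H b' = dcoset H b := by
  obtain ⟨h₁, hh₁, h₂, hh₂, rfl⟩ := h
  ext g
  constructor
  · rintro ⟨k₁, hk₁, k₂, hk₂, rfl⟩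
    exact ⟨k₁ * h₁, mul_mem hk₁ hh₁, h₂ * k₂, mul_mem hh₂ hk₂, by group⟩
  · rintro ⟨k₁, hk₁, k₂, hk₂, rfl⟩
    exact ⟨k₁ * h₁⁻¹, mul_mem hk₁ (inv_mem hh₁), h₂⁻¹ * k₂, mul_mem (inv_mem hh₂) hk₂,
      by group⟩

/-- The key phase well-definedness: under hypothesis (b), the phase of a double coset
element is well-defined. -/
lemma phase_wd {x : Gs}
    (hα : ∀ ζ : Gs, ζ ∈ G₀ → x * ζ * x⁻¹ ∈ G₀ →
      beta G₀ α (x * ζ * x⁻¹) = beta G₀ α ζ)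
    {ξ η ξ' η' : Gs} (hξ : ξ ∈ G₀) (hη : η ∈ G₀) (hξ' : ξ' ∈ G₀) (hη' : η' ∈ G₀)
    (heq : ξ * x * η = ξ' * x * η') :
    beta G₀ α ξ * beta G₀ α η = beta G₀ α ξ' * beta G₀ α η' := by
  have hζ : η * η'⁻¹ ∈ G₀ := mul_mem hη (inv_mem hη')
  have hc : x * (η * η'⁻¹) * x⁻¹ = ξ⁻¹ * ξ' := by
    have h1 : ξ * x * η * (η'⁻¹ * x⁻¹) = ξ' := by rw [heq]; group
    rw [← h1]; group
  have hmem : x * (η * η'⁻¹) * x⁻¹ ∈ G₀ := hc ▸ mul_mem (inv_mem hξ) hξ'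
  have key := hα (η * η'⁻¹) hζ hmem
  rw [hc, beta_mul (inv_mem hξ) hξ', beta_inv hξ, beta_mul hη (inv_mem hη'),
    beta_inv hη'] at key
  -- key : (beta ξ)⁻¹ * beta ξ' = beta η * (beta η')⁻¹
  apply unit_eq
  have keyC : ((beta G₀ α ξ : ℂˣ) : ℂ)⁻¹ * (beta G₀ α ξ' : ℂˣ) =
      ((beta G₀ α η : ℂˣ) : ℂ) * ((beta G₀ α η' : ℂˣ) : ℂ)⁻¹ := by
    exact_mod_cast congrArg Units.val key
  push_cast
  have n1 : ((beta G₀ α ξ : ℂˣ) : ℂ) ≠ 0 := Units.ne_zero _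
  have n2 : ((beta G₀ α η' : ℂˣ) : ℂ) ≠ 0 := Units.ne_zero _
  field_simp at keyC
  linear_combination -keyC

end HPD

open HPD

/-- Higman pair detector: in the radicalization setting, for any fixed `x ∈ G* ∖ G₀*`,
the radicalization `(G̃*, H)` of `(G*, G₀*, α)` is a Higman pair if and only if every
`ξ ∈ G₀*` with `x ξ x⁻¹ ∈ G₀*` satisfies `α(x ξ x⁻¹) = α(ξ)`. -/
theorem stmt9 {Gs : Type*} [Group Gs] [Finite Gs] (G₀ : Subgroup Gs)
    (hidx : 3 ≤ G₀.index) (hdt : DTCosets G₀) (α : ↥G₀ →* ℂˣ)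
    (x : Gs) (hx : x ∉ G₀) :
    IsHigmanPair (radH G₀ α (2 * Nat.card α.range)) ↔
      ∀ ξ : ↥G₀, ∀ h : x * (ξ : Gs) * x⁻¹ ∈ G₀,
        α ⟨x * (ξ : Gs) * x⁻¹, h⟩ = α ξ := by
  classical
  set r : ℕ := 2 * Nat.card α.range with hrdef
  have hr' : ∀ ξ : ↥G₀, (α ξ) ^ (Nat.card α.range) = 1 := by
    intro ξ
    have h1 : (⟨α ξ, ⟨ξ, rfl⟩⟩ : α.range) ^ (Nat.card α.range) = 1 := pow_card_eq_one'
    have := congrArg (Subtype.val) h1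
    simpa using this
  have hr : ∀ ξ : ↥G₀, (α ξ) ^ r = 1 := by
    intro ξ
    rw [hrdef, mul_comm, pow_mul, hr' ξ, one_pow]
  have hKnorm := normalizer_radH (α := α) (r := r) hidx hdt hr
  constructor
  · rintro ⟨-, b, hbK, -, -, -, -, h5⟩ ξ hmem
    rw [hKnorm] at hbK h5
    have hg : b.1 ∉ G₀ := fun h => hbK (Subgroup.mem_prod.mpr ⟨h, trivial⟩)
    obtain ⟨s, t, hs, ht, hbst⟩ := decomp hdt hx hg
    have hξvG : (ξ : Gs) ∈ G₀ := ξ.2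
    have hδG : s * (x * (ξ : Gs) * x⁻¹) * s⁻¹ ∈ G₀ :=
      mul_mem (mul_mem hs hmem) (inv_mem hs)
    set γ : ℂˣ := beta G₀ α (ξ : Gs) * (beta G₀ α (x * (ξ : Gs) * x⁻¹))⁻¹ with hγ
    have hγr : γ ^ r = 1 := by
      rw [hγ, mul_pow, inv_pow, beta_pow hr, beta_pow hr, inv_one, mul_one]
    set a : Gs × rou r := ((1 : Gs), ⟨γ, hγr⟩) with ha
    have haK : a ∈ radTilde G₀ r := Subgroup.mem_prod.mpr ⟨one_mem _, trivial⟩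
    have hab : a * b ∈ dcoset (radH G₀ α r) b := by
      rw [show b = (b.1, b.2) from rfl, mem_dcoset_iff hr]
      refine ⟨s * (x * (ξ : Gs) * x⁻¹) * s⁻¹,
        b.1⁻¹ * (s * (x * (ξ : Gs) * x⁻¹) * s⁻¹)⁻¹ * b.1, hδG, ?_, ?_, ?_⟩
      · have he : b.1⁻¹ * (s * (x * (ξ : Gs) * x⁻¹) * s⁻¹)⁻¹ * b.1
            = t⁻¹ * (ξ : Gs)⁻¹ * t := by
          rw [hbst]; group
        rw [he]
        exact mul_mem (mul_mem (inv_mem ht) (inv_mem hξvG)) ht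
      · show (1 : Gs) * b.1 = _
        group
      · -- the phase computation
        have he : b.1⁻¹ * (s * (x * (ξ : Gs) * x⁻¹) * s⁻¹)⁻¹ * b.1
            = t⁻¹ * (ξ : Gs)⁻¹ * t := by
          rw [hbst]; group
        have e1 : beta G₀ α (s * (x * (ξ : Gs) * x⁻¹) * s⁻¹)
            = beta G₀ α (x * (ξ : Gs) * x⁻¹) := beta_conj hs hmem
        have e2 : beta G₀ α (b.1⁻¹ * (s * (x * (ξ : Gs) * x⁻¹) * s⁻¹)⁻¹ * b.1)
            = (beta G₀ α (ξ : Gs))⁻¹ := by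
          rw [he, show t⁻¹ * (ξ : Gs)⁻¹ * t = t⁻¹ * (ξ : Gs)⁻¹ * (t⁻¹)⁻¹ by
            rw [inv_inv], beta_conj (inv_mem ht) (inv_mem hξvG), beta_inv hξvG]
        show γ * (b.2 : ℂˣ) = _
        rw [e1, e2, hγ]
        apply Units.ext
        push_cast
        field_simp
    have haH := h5 a haK hab
    obtain ⟨-, he⟩ := mem_radH.mp haH
    have he' : beta G₀ α (1 : Gs) * γ = 1 := he
    rw [beta_one, one_mul, hγ, mul_inv_eq_one] at he'
    rw [← beta_eq hmem, ← show beta G₀ α (ξ : Gs) = α ξ from beta_eq ξ.2]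
    exact he'.symm
  · intro hcond
    have hα : ∀ ζ : Gs, ζ ∈ G₀ → x * ζ * x⁻¹ ∈ G₀ →
        beta G₀ α (x * ζ * x⁻¹) = beta G₀ α ζ := by
      intro ζ h1 h2
      rw [beta_eq h2, beta_eq h1]
      exact hcond ⟨ζ, h1⟩ h2
    constructor
    · intro hH
      have hmem : ((x, 1) : Gs × rou r) ∈ radH G₀ α r := by
        rw [hH]; trivial
      obtain ⟨h, -⟩ := mem_radH.mp hmem
      exact hx h
    · have hxinv : x⁻¹ ∉ G₀ := fun h => hx (by simpa using (inv_mem h))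
      obtain ⟨u, v, hu, hv, huv⟩ := decomp hdt hx hxinv
      obtain ⟨z0, hz0⟩ := IsAlgClosed.exists_pow_nat_eq
        ((beta G₀ α (u * v) : ℂˣ) : ℂ) (n := 2) two_pos
      have hz0ne : z0 ≠ 0 := by
        intro h
        apply Units.ne_zero (beta G₀ α (u * v))
        rw [← hz0, h]; ring
      set zu : ℂˣ := Units.mk0 z0 hz0ne with hzu
      have hz2 : (zu : ℂ) * zu = ((beta G₀ α u : ℂˣ) : ℂ) * ((beta G₀ α v : ℂˣ) : ℂ) := by
        have h3 := hz0
        rw [beta_mul hu hv] at h3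
        have h4 : ((beta G₀ α u * beta G₀ α v : ℂˣ) : ℂ)
            = ((beta G₀ α u : ℂˣ) : ℂ) * ((beta G₀ α v : ℂˣ) : ℂ) := by push_cast; ring
        have h5 : (zu : ℂ) = z0 := rfl
        rw [h5, ← h4, ← h3]; ring
      have hz2u : zu * zu = beta G₀ α u * beta G₀ α v := by
        apply Units.ext; push_cast; exact hz2
      have hzr : zu ^ r = 1 := by
        have : zu ^ r = (zu * zu) ^ (Nat.card α.range) := by
          rw [hrdef, pow_mul, sq]
        rw [this, hz2u, ← beta_mul hu hv, beta_pow hr']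
      set zel : rou r := ⟨zu, hzr⟩ with hzel
      refine ⟨(x, zel), ?_, ?_, ?_, ?_, ?_, ?_⟩
      · rw [hKnorm]
        intro hmem
        exact hx (Subgroup.mem_prod.mp hmem).1
      · rw [hKnorm]
        exact dt_tilde hdt
      · intro a haK a' haK'
        rw [hKnorm] at haK haK'
        have ha1 := (Subgroup.mem_prod.mp haK).1
        have ha1' := (Subgroup.mem_prod.mp haK').1
        apply mem_radH.mpr
        refine ⟨mul_mem (mul_mem (mul_mem ha1 ha1') (inv_mem ha1)) (inv_mem ha1'), ?_⟩
        show beta G₀ α (a.1 * a'.1 * a.1⁻¹ * a'.1⁻¹)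
          * ((a.2 * a'.2 * a.2⁻¹ * a'.2⁻¹ : rou r) : ℂˣ) = 1
        rw [beta_mul (mul_mem (mul_mem ha1 ha1') (inv_mem ha1)) (inv_mem ha1'),
          beta_mul (mul_mem ha1 ha1') (inv_mem ha1), beta_mul ha1 ha1',
          beta_inv ha1, beta_inv ha1']
        apply Units.ext
        push_cast
        field_simp
      · -- dcoset H b = dcoset H b⁻¹
        refine (dcoset_eq_of_mem ?_).symm
        have hb' : ((x, zel) : Gs × rou r)⁻¹ = ((x⁻¹ : Gs), zel⁻¹) := rfl
        rw [hb', mem_dcoset_iff hr]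
        refine ⟨u, v, hu, hv, huv, ?_⟩
        show ((zel⁻¹ : rou r) : ℂˣ) = _
        have hc : ((zel⁻¹ : rou r) : ℂˣ) = zu⁻¹ := rfl
        rw [hc]
        apply Units.ext
        push_cast
        field_simp
        linear_combination -hz2
      · intro a haK
        rw [hKnorm] at haK
        have ha1 := (Subgroup.mem_prod.mp haK).1
        rw [mem_dcoset_iff hr]
        refine ⟨a.1, a.1⁻¹, ha1, inv_mem ha1, rfl, ?_⟩
        show ((a.2 * zel * a.2⁻¹ : rou r) : ℂˣ) = _
        rw [beta_inv ha1, inv_inv]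
        apply Units.ext
        push_cast
        field_simp
      · intro a haK hab
        rw [hKnorm] at haK
        have ha1 := (Subgroup.mem_prod.mp haK).1
        rw [mem_dcoset_iff hr] at hab
        obtain ⟨ξ, η, hξ, hη, h1, h2⟩ := hab
        have h1' : a.1 * x * 1 = ξ * x * η := by
          rw [mul_one]; exact h1
        have hph := phase_wd hα ha1 (one_mem G₀) hξ hη h1'
        rw [beta_one, mul_one] at hph
        apply mem_radH.mpr
        refine ⟨ha1, ?_⟩
        have h2' : ((a.2 * zel : rou r) : ℂˣ)
            = (beta G₀ α ξ)⁻¹ * zu * (beta G₀ α η)⁻¹ := h2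
        rw [hph]
        apply Units.ext
        push_cast
        have h2c : ((a.2 : ℂˣ) : ℂ) * zu
            = (((beta G₀ α ξ)⁻¹ * zu * (beta G₀ α η)⁻¹ : ℂˣ) : ℂ) := by
          exact_mod_cast congrArg Units.val h2'
        push_cast at h2c
        have n1 : ((beta G₀ α ξ : ℂˣ) : ℂ) ≠ 0 := Units.ne_zero _
        have n2 : ((beta G₀ α η : ℂˣ) : ℂ) ≠ 0 := Units.ne_zero _
        field_simp at h2c
        apply mul_right_cancel₀ (Units.ne_zero zu)
        linear_combination (zu : ℂ) * h2c
end
end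

section
/- Let F be a finite field, let G* = SL(2, F), and let G₀* ≤ G* be the subgroup of upper triangular matrices (all A with A 1 0 = 0), which has index |F| + 1 ≥ 3 and for which the action of G* on G*/G₀* is doubly transitive. Let α' : Fˣ →* ℂˣ be a group homomorphism and define α : G₀* →* ℂˣ by α(A) = α'(A 0 0). Then the radicalization (G̃*, H) of (G*, G₀*, α) is a Higman pair if and only if α' is real-valued, i.e. α'(a)² = 1 for every a ∈ Fˣ. -/
noncomputable section

variable {Gs : Type*} [Group Gs]

/-- The subgroup of upper triangular matrices in `SL(2, F)`. -/
def borelSL (F : Type*) [Field F] : Subgroup (Matrix.SpecialLinearGroup (Fin 2) F) where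
  carrier := {A | (A : Matrix (Fin 2) (Fin 2) F) 1 0 = 0}
  one_mem' := by
    show (1 : Matrix.SpecialLinearGroup (Fin 2) F).val 1 0 = 0
    simp [Matrix.one_apply]
  mul_mem' := by
    intro A B hA hB
    show ((A * B : Matrix.SpecialLinearGroup (Fin 2) F) : Matrix (Fin 2) (Fin 2) F) 1 0 = 0
    simp only [Matrix.SpecialLinearGroup.coe_mul, Matrix.mul_apply, Fin.sum_univ_two]
    simp only [Set.mem_setOf_eq] at hA hB
    rw [hA, hB]
    ring
  inv_mem' := by
    intro A hA
    show ((A⁻¹ : Matrix.SpecialLinearGroup (Fin 2) F) : Matrix (Fin 2) (Fin 2) F) 1 0 = 0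
    simp only [Set.mem_setOf_eq] at hA
    rw [Matrix.SpecialLinearGroup.coe_inv, Matrix.adjugate_fin_two]
    simp [hA]

theorem borel_det_ne_zero {F : Type*} [Field F] (A : ↥(borelSL F)) :
    ((A : Matrix.SpecialLinearGroup (Fin 2) F) : Matrix (Fin 2) (Fin 2) F) 0 0 ≠ 0 := by
  have hdet : ((A : Matrix.SpecialLinearGroup (Fin 2) F) : Matrix (Fin 2) (Fin 2) F).det = 1 :=
    (A : Matrix.SpecialLinearGroup (Fin 2) F).2
  rw [Matrix.det_fin_two] at hdet
  have h10 : ((A : Matrix.SpecialLinearGroup (Fin 2) F) : Matrix (Fin 2) (Fin 2) F) 1 0 = 0 :=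
    A.2
  rw [h10, mul_zero, sub_zero] at hdet
  exact left_ne_zero_of_mul_eq_one hdet

/-- The character `α(A) = α'(A 0 0)` on the upper triangular subgroup of `SL(2, F)`. -/
def borelSLChar (F : Type*) [Field F] (α' : Fˣ →* ℂˣ) : ↥(borelSL F) →* ℂˣ where
  toFun A := α' (Units.mk0 _ (borel_det_ne_zero A))
  map_one' := by
    have : Units.mk0 _ (borel_det_ne_zero (1 : ↥(borelSL F))) = 1 := by
      ext
      show ((1 : Matrix.SpecialLinearGroup (Fin 2) F) : Matrix (Fin 2) (Fin 2) F) 0 0 = 1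
      simp [Matrix.one_apply]
    show α' (Units.mk0 _ (borel_det_ne_zero 1)) = 1
    rw [this, map_one]
  map_mul' A B := by
    have : Units.mk0 _ (borel_det_ne_zero (A * B)) =
        Units.mk0 _ (borel_det_ne_zero A) * Units.mk0 _ (borel_det_ne_zero B) := by
      ext
      show ((A * B : Matrix.SpecialLinearGroup (Fin 2) F) : Matrix (Fin 2) (Fin 2) F) 0 0 = _
      simp only [Matrix.SpecialLinearGroup.coe_mul, Matrix.mul_apply, Fin.sum_univ_two,
        Units.val_mul, Units.val_mk0]
      have h10 : ((B : Matrix.SpecialLinearGroup (Fin 2) F) : Matrix (Fin 2) (Fin 2) F) 1 0 = 0 :=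
        B.2
      rw [h10, mul_zero, add_zero]
    show α' (Units.mk0 _ (borel_det_ne_zero (A * B))) = _
    rw [this, map_mul]


/-! ### Auxiliary lemmas -/

section Generic

variable {Gs : Type*} [Group Gs]

lemma mem_radH_iff (G₀ : Subgroup Gs) (α : G₀ →* ℂˣ) (r : ℕ) (x : Gs × ↥(rou r)) :
    x ∈ radH G₀ α r ↔ ∃ h : x.1 ∈ G₀, α ⟨x.1, h⟩ * (x.2 : ℂˣ) = 1 := by
  rw [radH, Subgroup.mem_map]
  constructor
  · rintro ⟨y, hy, rfl⟩
    rw [MonoidHom.mem_ker] at hy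
    exact ⟨y.2.1, hy⟩
  · rintro ⟨h, hαx⟩
    exact ⟨⟨x, Subgroup.mem_prod.mpr ⟨h, trivial⟩⟩, MonoidHom.mem_ker.mpr hαx, rfl⟩

lemma dcoset_eq_of_inv_mem {H : Subgroup Gs} {b : Gs} (hb : b⁻¹ ∈ dcoset H b) :
    dcoset H b = dcoset H b⁻¹ := by
  obtain ⟨h₁, hh₁, h₂, hh₂, hb'⟩ := hb
  have hbb : b = h₂⁻¹ * b⁻¹ * h₁⁻¹ := by
    have h := congrArg (·⁻¹) hb'
    simp only [mul_inv_rev, inv_inv] at h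
    exact h.trans (by group)
  ext g
  constructor
  · rintro ⟨k₁, hk₁, k₂, hk₂, rfl⟩
    exact ⟨k₁ * h₂⁻¹, mul_mem hk₁ (inv_mem hh₂), h₁⁻¹ * k₂, mul_mem (inv_mem hh₁) hk₂, by
      conv_lhs => rw [hbb]
      group⟩
  · rintro ⟨k₁, hk₁, k₂, hk₂, rfl⟩
    exact ⟨k₁ * h₁, mul_mem hk₁ hh₁, h₂ * k₂, mul_mem hh₂ hk₂, by
      conv_lhs => rw [hb']
      group⟩

end Generic


section SLAux
set_option linter.unusedSectionVars false

/-- Shorthand for `SL(2, F)`. -/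
abbrev SL2 (F : Type*) [Field F] := Matrix.SpecialLinearGroup (Fin 2) F

/-- Build an element of `SL(2, F)` from entries. -/
def mkSL {F : Type*} [Field F] (a b c d : F) (h : a * d - b * c = 1) : SL2 F :=
  ⟨!![a, b; c, d], by rw [Matrix.det_fin_two_of]; exact h⟩

variable {F : Type*} [Field F] [Fintype F] (α' : Fˣ →* ℂˣ)

lemma det_rel (x : SL2 F) : x.val 0 0 * x.val 1 1 - x.val 0 1 * x.val 1 0 = 1 := by
  have := x.2; rwa [Matrix.det_fin_two] at this

instance : Finite (SL2 F) := Subtype.finite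

lemma mem_borel {x : SL2 F} : x ∈ borelSL F ↔ x.val 1 0 = 0 := Iff.rfl

lemma char_apply (A : ↥(borelSL F)) (t : Fˣ)
    (h : ((A : SL2 F) : Matrix (Fin 2) (Fin 2) F) 0 0 = t) :
    borelSLChar F α' A = α' t := by
  have : Units.mk0 _ (borel_det_ne_zero A) = t := Units.ext h
  show α' (Units.mk0 _ (borel_det_ne_zero A)) = α' t
  rw [this]

lemma char_congr (A B : ↥(borelSL F))
    (h : ((A : SL2 F) : Matrix (Fin 2) (Fin 2) F) 0 0
       = ((B : SL2 F) : Matrix (Fin 2) (Fin 2) F) 0 0) :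
    borelSLChar F α' A = borelSLChar F α' B := by
  have : Units.mk0 _ (borel_det_ne_zero A) = Units.mk0 _ (borel_det_ne_zero B) := Units.ext h
  show α' (Units.mk0 _ (borel_det_ne_zero A)) = α' (Units.mk0 _ (borel_det_ne_zero B))
  rw [this]

lemma range_pow_card {z : ℂˣ} (hz : z ∈ (borelSLChar F α').range) :
    z ^ Nat.card (borelSLChar F α').range = 1 := by
  have hfin : Finite ↥(borelSLChar F α').range := by
    have h1 : (Set.range (borelSLChar F α')).Finite := Set.finite_range _
    have h2 : ((borelSLChar F α').range : Set ℂˣ) = Set.range (borelSLChar F α') :=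
      MonoidHom.coe_range _
    rw [← h2] at h1
    exact h1.to_subtype
  have h1 : (⟨z, hz⟩ : ↥(borelSLChar F α').range) ^ Nat.card (borelSLChar F α').range = 1 :=
    pow_card_eq_one'
  have h2 := congrArg Subtype.val h1
  simpa using h2

lemma range_pow_r {z : ℂˣ} (hz : z ∈ (borelSLChar F α').range) :
    z ^ (2 * Nat.card (borelSLChar F α').range) = 1 := by
  rw [mul_comm, pow_mul, range_pow_card α' hz, one_pow]

/-- The diagonal matrix `diag(t, t⁻¹)`. -/
def diagSL (t : Fˣ) : SL2 F := mkSL (t : F) 0 0 ((t : F)⁻¹) (by rw [mul_zero, sub_zero, mul_inv_cancel₀ (Units.ne_zero t)])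

lemma alpha'_mem_range (t : Fˣ) : α' t ∈ (borelSLChar F α').range := by
  refine ⟨⟨diagSL t, ?_⟩, ?_⟩
  · exact mem_borel.mpr rfl
  · exact char_apply α' _ t rfl

lemma alpha'_pow_r (t : Fˣ) : (α' t) ^ (2 * Nat.card (borelSLChar F α').range) = 1 :=
  range_pow_r α' (alpha'_mem_range α' t)

end SLAux


section SLMain
set_option linter.unusedSectionVars false

variable {F : Type*} [Field F] [Fintype F] (α' : Fˣ →* ℂˣ)

/-- `r = 2 r'`. -/
abbrev rNum (F : Type*) [Field F] [Fintype F] (α' : Fˣ →* ℂˣ) : ℕ :=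
  2 * Nat.card (borelSLChar F α').range

/-- The subgroup `H` of the radicalization. -/
abbrev HSL (F : Type*) [Field F] [Fintype F] (α' : Fˣ →* ℂˣ) :
    Subgroup (SL2 F × ↥(rou (rNum F α'))) :=
  radH (borelSL F) (borelSLChar F α') (rNum F α')

/-- The subgroup `K = G₀ × μ_r`. -/
abbrev KSL (F : Type*) [Field F] [Fintype F] (α' : Fˣ →* ℂˣ) :
    Subgroup (SL2 F × ↥(rou (rNum F α'))) :=
  radTilde (borelSL F) (rNum F α')

lemma conj_borel_entries (x y : SL2 F) (hx : x.val 1 0 = 0) (hy : y.val 1 0 = 0) :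
    (x * y * x⁻¹).val 1 0 = 0 ∧ (x * y * x⁻¹).val 0 0 = y.val 0 0 := by
  have dx := det_rel x
  simp only [Matrix.SpecialLinearGroup.coe_mul, Matrix.SpecialLinearGroup.coe_inv,
    Matrix.adjugate_fin_two, Matrix.of_apply, Matrix.mul_apply, Fin.sum_univ_two,
    Matrix.cons_val_zero, Matrix.cons_val_one, Matrix.head_cons, Matrix.cons_val',
    Matrix.head_fin_const, Matrix.empty_val', Matrix.cons_val_fin_one]
  constructor
  · linear_combination (x.val 1 1 * y.val 0 0 - x.val 1 0 * y.val 0 1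
      - x.val 1 1 * y.val 1 1) * hx + (x.val 1 1)^2 * hy
  · linear_combination y.val 0 0 * dx + (x.val 0 1 * y.val 0 0 - x.val 0 0 * y.val 0 1
      - x.val 0 1 * y.val 1 1) * hx + x.val 0 1 * x.val 1 1 * hy

lemma conj_mem_HSL {a h : SL2 F × ↥(rou (rNum F α'))} (ha : a ∈ KSL F α')
    (hh : h ∈ HSL F α') : a * h * a⁻¹ ∈ HSL F α' := by
  obtain ⟨ha1, -⟩ := Subgroup.mem_prod.mp ha
  obtain ⟨hx, heq⟩ := (mem_radH_iff _ _ _ h).mp hh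
  obtain ⟨hc1, hc0⟩ := conj_borel_entries a.1 h.1 ha1 hx
  refine (mem_radH_iff _ _ _ _).mpr ⟨hc1, ?_⟩
  have hchar : borelSLChar F α' ⟨(a * h * a⁻¹).1, hc1⟩ = borelSLChar F α' ⟨h.1, hx⟩ :=
    char_congr α' _ _ hc0
  have hsnd : ((a * h * a⁻¹).2 : ℂˣ) = (h.2 : ℂˣ) := by
    show ((a.2 * h.2 * a.2⁻¹ : ↥(rou (rNum F α'))) : ℂˣ) = _
    rw [mul_comm a.2 h.2]
    simp
  rw [hchar, hsnd]
  exact heq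

lemma KSL_le_normalizer : KSL F α' ≤ Subgroup.normalizer (HSL F α' : Set (SL2 F × ↥(rou (rNum F α')))) := by
  intro a ha
  rw [Subgroup.mem_normalizer_iff]
  intro h
  constructor
  · exact fun hh => conj_mem_HSL α' ha hh
  · intro hh
    have h2 := conj_mem_HSL α' (inv_mem ha) hh
    have h3 : a⁻¹ * (a * h * a⁻¹) * a⁻¹⁻¹ = h := by group
    rwa [h3] at h2

/-- The unipotent `[[1,1],[0,1]]`. -/
def uSL : SL2 F := mkSL 1 1 0 1 (by ring)

lemma uSL_mem_HSL : ((uSL, 1) : SL2 F × ↥(rou (rNum F α'))) ∈ HSL F α' := by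
  refine (mem_radH_iff _ _ _ _).mpr ⟨mem_borel.mpr rfl, ?_⟩
  rw [char_apply α' _ 1 (by simp [uSL, mkSL]), map_one]
  simp

lemma conj_uSL_entry (g : SL2 F) : (g * uSL * g⁻¹).val 1 0 = -(g.val 1 0)^2 := by
  simp only [Matrix.SpecialLinearGroup.coe_mul, Matrix.SpecialLinearGroup.coe_inv]
  simp only [uSL, mkSL, Matrix.SpecialLinearGroup.coe_mul, Matrix.SpecialLinearGroup.coe_inv,
    Matrix.adjugate_fin_two, Matrix.of_apply, Matrix.mul_apply, Fin.sum_univ_two,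
    Matrix.cons_val_zero, Matrix.cons_val_one, Matrix.head_cons, Matrix.cons_val',
    Matrix.head_fin_const, Matrix.empty_val', Matrix.cons_val_fin_one]
  ring

lemma normalizer_le_KSL : Subgroup.normalizer (HSL F α' : Set (SL2 F × ↥(rou (rNum F α')))) ≤ KSL F α' := by
  intro a ha
  rw [Subgroup.mem_normalizer_iff] at ha
  have h1 : a * (uSL, 1) * a⁻¹ ∈ HSL F α' := (ha _).mp (uSL_mem_HSL α')
  obtain ⟨hmem, -⟩ := (mem_radH_iff _ _ _ _).mp h1
  have h2 : (a.1 * uSL * a.1⁻¹).val 1 0 = 0 := hmem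
  rw [conj_uSL_entry] at h2
  have h3 : a.1.val 1 0 = 0 := by
    have := neg_eq_zero.mp h2
    exact pow_eq_zero_iff (n := 2) (by norm_num) |>.mp this
  exact Subgroup.mem_prod.mpr ⟨h3, trivial⟩

lemma normalizer_eq_KSL : Subgroup.normalizer (HSL F α' : Set (SL2 F × ↥(rou (rNum F α')))) = KSL F α' :=
  le_antisymm (normalizer_le_KSL α') (KSL_le_normalizer α')

end SLMain


section SLDT
set_option linter.unusedSectionVars false

variable {F : Type*} [Field F] [Fintype F] (α' : Fˣ →* ℂˣ)

/-- The Weyl element `[[0,-1],[1,0]]`. -/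
def wSL : SL2 F := mkSL 0 (-1) 1 0 (by ring)

lemma wSL_not_borel : (wSL : SL2 F) ∉ borelSL F := by
  intro h
  have : (1 : F) = 0 := h
  exact one_ne_zero this

lemma std_entry (s : SL2 F) (hc : s.val 1 0 ≠ 0) :
    ((mkSL 1 (-(s.val 0 0 / s.val 1 0)) 0 1 (by ring) * s)⁻¹ * wSL).val 1 0 = 0 := by
  simp only [Matrix.SpecialLinearGroup.coe_mul, Matrix.SpecialLinearGroup.coe_inv]
  simp only [wSL, mkSL, Matrix.SpecialLinearGroup.coe_mul, Matrix.SpecialLinearGroup.coe_inv,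
    Matrix.adjugate_fin_two, Matrix.of_apply, Matrix.mul_apply, Fin.sum_univ_two,
    Matrix.cons_val_zero, Matrix.cons_val_one, Matrix.head_cons, Matrix.cons_val',
    Matrix.head_fin_const, Matrix.empty_val', Matrix.cons_val_fin_one]
  field_simp
  ring

lemma exists_to_std (x y : SL2 F × ↥(rou (rNum F α')))
    (h : (QuotientGroup.mk x : _ ⧸ KSL F α') ≠ QuotientGroup.mk y) :
    ∃ g : SL2 F × ↥(rou (rNum F α')),
      g • (QuotientGroup.mk x : _ ⧸ KSL F α') = QuotientGroup.mk (1 : SL2 F × ↥(rou (rNum F α'))) ∧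
      g • (QuotientGroup.mk y : _ ⧸ KSL F α')
        = QuotientGroup.mk ((wSL, 1) : SL2 F × ↥(rou (rNum F α'))) := by
  have hs : x⁻¹ * y ∉ KSL F α' := fun hk => h (QuotientGroup.eq.mpr hk)
  have hc : (x.1⁻¹ * y.1).val 1 0 ≠ 0 := by
    intro h0
    exact hs (Subgroup.mem_prod.mpr ⟨mem_borel.mpr h0, trivial⟩)
  set s : SL2 F := x.1⁻¹ * y.1 with hsdef
  set m : SL2 F := mkSL 1 (-(s.val 0 0 / s.val 1 0)) 0 1 (by ring) with hmdef
  refine ⟨(m * x.1⁻¹, x.2⁻¹), ?_, ?_⟩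
  · rw [MulAction.Quotient.smul_mk, QuotientGroup.eq]
    rw [mul_one]
    apply inv_mem
    refine Subgroup.mem_prod.mpr ⟨?_, trivial⟩
    show m * x.1⁻¹ * x.1 ∈ borelSL F
    have : m * x.1⁻¹ * x.1 = m := by group
    rw [this]
    exact mem_borel.mpr rfl
  · rw [MulAction.Quotient.smul_mk, QuotientGroup.eq]
    refine Subgroup.mem_prod.mpr ⟨?_, trivial⟩
    show ((m * x.1⁻¹ * y.1)⁻¹ * wSL) ∈ borelSL F
    have h1 : m * x.1⁻¹ * y.1 = m * s := by rw [hsdef]; group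
    rw [h1]
    exact mem_borel.mpr (std_entry s hc)

lemma dt_KSL : DTCosets (KSL F α') := by
  intro a b c e hab hce
  obtain ⟨x, rfl⟩ := QuotientGroup.mk_surjective a
  obtain ⟨y, rfl⟩ := QuotientGroup.mk_surjective b
  obtain ⟨z, rfl⟩ := QuotientGroup.mk_surjective c
  obtain ⟨u, rfl⟩ := QuotientGroup.mk_surjective e
  obtain ⟨g₁, hg₁₁, hg₁₂⟩ := exists_to_std α' x y hab
  obtain ⟨g₂, hg₂₁, hg₂₂⟩ := exists_to_std α' z u hce
  refine ⟨g₂⁻¹ * g₁, ?_, ?_⟩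
  · rw [mul_smul, hg₁₁, ← hg₂₁, inv_smul_smul]
  · rw [mul_smul, hg₁₂, ← hg₂₂, inv_smul_smul]

end SLDT


section SLBackward
set_option linter.unusedSectionVars false

variable {F : Type*} [Field F] [Fintype F] (α' : Fˣ →* ℂˣ)

lemma comm4 {M : Type*} [CommGroup M] (u v : M) : u * v * u⁻¹ * v⁻¹ = 1 := by
  rw [mul_comm u v]; group

lemma exists_z (hα : ∀ a : Fˣ, α' a ^ 2 = 1) :
    ∃ z : ℂˣ, z ^ rNum F α' = 1 ∧ z * z = α' (-1) := by
  have h2 : ((α' (-1) : ℂˣ) : ℂ) ^ 2 = 1 := by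
    have := congrArg (Units.val) (hα (-1))
    simpa using this
  have h3 : (((α' (-1) : ℂˣ) : ℂ) - 1) * (((α' (-1) : ℂˣ) : ℂ) + 1) = 0 := by
    linear_combination h2
  rcases mul_eq_zero.mp h3 with h4 | h4
  · have h5 : α' (-1) = 1 := Units.ext (by rw [Units.val_one]; linear_combination h4)
    exact ⟨1, one_pow _, by rw [h5, one_mul]⟩
  · have h5 : α' (-1) = -1 := Units.ext (by push_cast; linear_combination h4)
    have hm1 : (-1 : ℂˣ) ∈ (borelSLChar F α').range := h5 ▸ alpha'_mem_range α' (-1)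
    have hpow : (-1 : ℂˣ) ^ Nat.card (borelSLChar F α').range = 1 := range_pow_card α' hm1
    have heven : Even (Nat.card (borelSLChar F α').range) := by
      rcases Nat.even_or_odd (Nat.card (borelSLChar F α').range) with h | h
      · exact h
      · exfalso
        rw [h.neg_one_pow] at hpow
        have := congrArg (Units.val) hpow
        simp at this
        norm_num at this
    obtain ⟨k, hk⟩ := heven
    refine ⟨Units.mk0 Complex.I Complex.I_ne_zero, ?_, ?_⟩
    · apply Units.ext
      rw [Units.val_pow_eq_pow_val, Units.val_one]
      show Complex.I ^ (2 * Nat.card (borelSLChar F α').range) = 1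
      rw [hk, show 2 * (k + k) = 4 * k by ring, pow_mul, Complex.I_pow_four, one_pow]
    · apply Units.ext
      rw [h5]
      show Complex.I * Complex.I = _
      rw [Complex.I_mul_I]
      simp

/-- The matrix `-1`. -/
def negISL : SL2 F := mkSL (-1) 0 0 (-1) (by ring)

lemma negISL_char : borelSLChar F α' ⟨negISL, mem_borel.mpr rfl⟩ = α' (-1) :=
  char_apply α' _ (-1) (by simp [negISL, mkSL])

lemma HSL_ne_top : HSL F α' ≠ ⊤ := by
  intro htop
  have hmem : ((wSL, 1) : SL2 F × ↥(rou (rNum F α'))) ∈ HSL F α' := by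
    rw [htop]; exact Subgroup.mem_top _
  obtain ⟨hb, -⟩ := (mem_radH_iff _ _ _ _).mp hmem
  exact wSL_not_borel hb

lemma final_entries (x h₁ h₂ : SL2 F) (hx : x.val 1 0 = 0) (hh₁ : h₁.val 1 0 = 0)
    (hh₂ : h₂.val 1 0 = 0) (heq : x * wSL = h₁ * wSL * h₂) :
    h₂.val 0 1 = 0 ∧ x.val 0 0 = h₁.val 0 0 * h₂.val 1 1 := by
  have d₁ := det_rel h₁
  have hp' : h₁.val 0 0 * h₁.val 1 1 = 1 := by
    linear_combination d₁ + h₁.val 0 1 * hh₁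
  have hp'ne : h₁.val 1 1 ≠ 0 := right_ne_zero_of_mul_eq_one hp'
  have e11 := congrArg (fun M : SL2 F => M.val 1 1) heq
  have e01 := congrArg (fun M : SL2 F => M.val 0 1) heq
  simp only [Matrix.SpecialLinearGroup.coe_mul] at e11 e01
  simp only [wSL, mkSL, Matrix.SpecialLinearGroup.coe_mul, Matrix.of_apply, Matrix.mul_apply,
    Fin.sum_univ_two, Matrix.cons_val_zero, Matrix.cons_val_one, Matrix.head_cons,
    Matrix.cons_val', Matrix.head_fin_const, Matrix.empty_val', Matrix.cons_val_fin_one] at e11 e01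
  have hf : h₂.val 0 1 = 0 := by
    have hf0 : h₁.val 1 1 * h₂.val 0 1 = 0 := by
      linear_combination -e11 - hx + h₂.val 1 1 * hh₁
    rcases mul_eq_zero.mp hf0 with h | h
    · exact absurd h hp'ne
    · exact h
  refine ⟨hf, ?_⟩
  linear_combination -e01 - h₁.val 0 1 * hf

end SLBackward


section SLBackwardMain
set_option linter.unusedSectionVars false

variable {F : Type*} [Field F] [Fintype F] (α' : Fˣ →* ℂˣ)

lemma wSL_inv_eq : (wSL : SL2 F)⁻¹ = negISL * wSL := by
  apply Subtype.ext
  rw [Matrix.SpecialLinearGroup.coe_inv, Matrix.SpecialLinearGroup.coe_mul]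
  ext i j
  fin_cases i <;> fin_cases j <;>
    simp [wSL, negISL, mkSL, Matrix.adjugate_fin_two, Matrix.mul_apply, Fin.sum_univ_two]

lemma backward (hα : ∀ a : Fˣ, α' a ^ 2 = 1) : IsHigmanPair (HSL F α') := by
  obtain ⟨z, hzr, hz2⟩ := exists_z α' hα
  set zel : ↥(rou (rNum F α')) := ⟨z, hzr⟩ with hzel
  refine ⟨HSL_ne_top α', ((wSL, zel)), ?_, ?_, ?_, ?_, ?_, ?_⟩
  · -- b ∉ normalizer
    intro hmem
    exact wSL_not_borel (Subgroup.mem_prod.mp (normalizer_le_KSL α' hmem)).1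
  · -- DT
    rw [normalizer_eq_KSL]
    exact dt_KSL α'
  · -- commutators in H
    intro a ha a' ha'
    have ha1 : a.1 ∈ borelSL F := (Subgroup.mem_prod.mp (normalizer_le_KSL α' ha)).1
    have ha1' : a'.1 ∈ borelSL F := (Subgroup.mem_prod.mp (normalizer_le_KSL α' ha')).1
    set A : ↥(borelSL F) := ⟨a.1, ha1⟩
    set A' : ↥(borelSL F) := ⟨a'.1, ha1'⟩
    have hmem : (a * a' * a⁻¹ * a'⁻¹).1 ∈ borelSL F :=
      mul_mem (mul_mem (mul_mem ha1 ha1') (inv_mem ha1)) (inv_mem ha1')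
    refine (mem_radH_iff _ _ _ _).mpr ⟨hmem, ?_⟩
    show borelSLChar F α' (A * A' * A⁻¹ * A'⁻¹)
      * ((a.2 * a'.2 * a.2⁻¹ * a'.2⁻¹ : ↥(rou (rNum F α'))) : ℂˣ) = 1
    rw [comm4, map_mul, map_mul, map_mul, map_inv, map_inv, comm4]
    simp
  · -- HbH = Hb⁻¹H
    apply dcoset_eq_of_inv_mem
    have hζ : (α' (-1))⁻¹ ∈ rou (rNum F α') := by
      show ((α' (-1))⁻¹) ^ (rNum F α') = 1
      rw [inv_pow, alpha'_pow_r, inv_one]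
    refine ⟨(negISL, ⟨(α' (-1))⁻¹, hζ⟩), ?_, 1, one_mem _, ?_⟩
    · refine (mem_radH_iff _ _ _ _).mpr ⟨mem_borel.mpr rfl, ?_⟩
      show borelSLChar F α' ⟨negISL, mem_borel.mpr rfl⟩ * (α' (-1))⁻¹ = 1
      rw [negISL_char]
      simp
    · rw [mul_one]
      refine Prod.ext ?_ ?_
      · exact wSL_inv_eq
      · apply Subtype.ext
        show z⁻¹ = (α' (-1))⁻¹ * z
        rw [← hz2]
        group
  · -- conjugation stays in HbH
    intro a ha
    have ha1 : a.1 ∈ borelSL F := (Subgroup.mem_prod.mp (normalizer_le_KSL α' ha)).1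
    set A : ↥(borelSL F) := ⟨a.1, ha1⟩ with hA
    have hr1 : (borelSLChar F α' A)⁻¹ ∈ rou (rNum F α') := by
      show ((borelSLChar F α' A)⁻¹) ^ (rNum F α') = 1
      rw [inv_pow, range_pow_r α' ⟨A, rfl⟩, inv_one]
    have hr2 : (borelSLChar F α' A) ∈ rou (rNum F α') := range_pow_r α' ⟨A, rfl⟩
    refine ⟨(a.1, ⟨(borelSLChar F α' A)⁻¹, hr1⟩), ?_, (a.1⁻¹, ⟨borelSLChar F α' A, hr2⟩), ?_, ?_⟩
    · refine (mem_radH_iff _ _ _ _).mpr ⟨ha1, ?_⟩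
      show borelSLChar F α' A * (borelSLChar F α' A)⁻¹ = 1
      simp
    · refine (mem_radH_iff _ _ _ _).mpr ⟨inv_mem ha1, ?_⟩
      show borelSLChar F α' A⁻¹ * (borelSLChar F α' A) = 1
      rw [map_inv]
      simp
    · refine Prod.ext rfl ?_
      apply Subtype.ext
      show (a.2 : ℂˣ) * z * (a.2 : ℂˣ)⁻¹
        = (borelSLChar F α' A)⁻¹ * z * (borelSLChar F α' A)
      rw [mul_comm ((a.2 : ℂˣ)) z, mul_inv_cancel_right]
      rw [mul_comm ((borelSLChar F α' A)⁻¹) z, mul_assoc, inv_mul_cancel, mul_one]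
  · -- final condition
    intro a ha hab
    have ha1 : a.1 ∈ borelSL F := (Subgroup.mem_prod.mp (normalizer_le_KSL α' ha)).1
    obtain ⟨h₁, hh₁, h₂, hh₂, heq⟩ := hab
    obtain ⟨hm₁, he₁⟩ := (mem_radH_iff _ _ _ _).mp hh₁
    obtain ⟨hm₂, he₂⟩ := (mem_radH_iff _ _ _ _).mp hh₂
    have hfst : a.1 * wSL = h₁.1 * wSL * h₂.1 := congrArg Prod.fst heq
    have hsnd : (a.2 : ℂˣ) * z = (h₁.2 : ℂˣ) * z * (h₂.2 : ℂˣ) :=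
      congrArg (fun p => ((p.2 : ↥(rou (rNum F α'))) : ℂˣ)) heq
    have ha2 : (a.2 : ℂˣ) = (h₁.2 : ℂˣ) * (h₂.2 : ℂˣ) := by
      have h' : (a.2 : ℂˣ) * z = ((h₁.2 : ℂˣ) * (h₂.2 : ℂˣ)) * z := by
        rw [hsnd, mul_right_comm]
      exact mul_right_cancel h'
    obtain ⟨hf, hx00⟩ := final_entries a.1 h₁.1 h₂.1 ha1 hm₁ hm₂ hfst
    -- units
    have d₁ := det_rel h₁.1
    have hm₁' : h₁.1.val 1 0 = 0 := hm₁
    have hm₂' : h₂.1.val 1 0 = 0 := hm₂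
    have hpp' : h₁.1.val 0 0 * h₁.1.val 1 1 = 1 := by
      linear_combination d₁ + h₁.1.val 0 1 * hm₁'
    have d₂ := det_rel h₂.1
    have hee' : h₂.1.val 0 0 * h₂.1.val 1 1 = 1 := by
      linear_combination d₂ + h₂.1.val 0 1 * hm₂'
    have hpne : h₁.1.val 0 0 ≠ 0 := left_ne_zero_of_mul_eq_one hpp'
    have hene : h₂.1.val 0 0 ≠ 0 := left_ne_zero_of_mul_eq_one hee'
    have he'ne : h₂.1.val 1 1 ≠ 0 := right_ne_zero_of_mul_eq_one hee'
    set up : Fˣ := Units.mk0 _ hpne with hup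
    set ue : Fˣ := Units.mk0 _ hene with hue
    set ue' : Fˣ := Units.mk0 _ he'ne with hue'
    have hcha : borelSLChar F α' ⟨a.1, ha1⟩ = α' (up * ue') := by
      refine char_apply α' _ _ ?_
      rw [Units.val_mul]
      exact hx00
    have hch1 : borelSLChar F α' ⟨h₁.1, hm₁⟩ = α' up := char_apply α' _ _ rfl
    have hch2 : borelSLChar F α' ⟨h₂.1, hm₂⟩ = α' ue := char_apply α' _ _ rfl
    have hue'inv : ue' = ue⁻¹ := by
      apply Units.ext
      show h₂.1.val 1 1 = (h₂.1.val 0 0)⁻¹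
      exact eq_inv_of_mul_eq_one_right hee'
    have hinv : (α' ue)⁻¹ = α' ue := by
      have hsq := hα ue
      rw [sq] at hsq
      exact inv_eq_of_mul_eq_one_right hsq
    rw [hch1] at he₁
    rw [hch2] at he₂
    refine (mem_radH_iff _ _ _ _).mpr ⟨ha1, ?_⟩
    rw [hcha, ha2, map_mul, hue'inv, map_inv, hinv, mul_mul_mul_comm, he₁, he₂, one_mul]

end SLBackwardMain


section SLForward
set_option linter.unusedSectionVars false

variable {F : Type*} [Field F] [Fintype F] (α' : Fˣ →* ℂˣ)

/-- The torus-like element used in the forward direction. -/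
def hMat (g : SL2 F) (t : Fˣ) : SL2 F :=
  mkSL (t : F) (g.val 1 1 * ((t : F) - (t : F)⁻¹) * (g.val 1 0)⁻¹) 0 ((t : F)⁻¹)
    (by rw [mul_zero, sub_zero, mul_inv_cancel₀ (Units.ne_zero t)])

lemma forward_entries (g : SL2 F) (hc : g.val 1 0 ≠ 0) (t : Fˣ) :
    (g * hMat g t * g⁻¹).val 1 0 = 0 ∧ (g * hMat g t * g⁻¹).val 0 0 = (t : F)⁻¹ := by
  have dg := det_rel g
  have ht : (t : F) ≠ 0 := Units.ne_zero t
  simp only [Matrix.SpecialLinearGroup.coe_mul, Matrix.SpecialLinearGroup.coe_inv]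
  simp only [hMat, mkSL, Matrix.SpecialLinearGroup.coe_mul, Matrix.SpecialLinearGroup.coe_inv,
    Matrix.adjugate_fin_two, Matrix.of_apply, Matrix.mul_apply, Fin.sum_univ_two,
    Matrix.cons_val_zero, Matrix.cons_val_one, Matrix.head_cons, Matrix.cons_val',
    Matrix.head_fin_const, Matrix.empty_val', Matrix.cons_val_fin_one]
  constructor
  · field_simp
    ring
  · field_simp
    linear_combination dg

lemma forward (hHP : IsHigmanPair (HSL F α')) (t : Fˣ) : α' t ^ 2 = 1 := by
  obtain ⟨-, b, hb1, -, -, -, -, hb6⟩ := hHP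
  have hgB : b.1 ∉ borelSL F := by
    intro hm
    exact hb1 (KSL_le_normalizer α' (Subgroup.mem_prod.mpr ⟨hm, trivial⟩))
  have hc : b.1.val 1 0 ≠ 0 := fun h0 => hgB (mem_borel.mpr h0)
  obtain ⟨hcomp1, hcomp0⟩ := forward_entries b.1 hc t
  have hζ : (α' t)⁻¹ ∈ rou (rNum F α') := by
    show ((α' t)⁻¹) ^ (rNum F α') = 1
    rw [inv_pow, alpha'_pow_r, inv_one]
  set atil : SL2 F × ↥(rou (rNum F α')) :=
    (b.1 * hMat b.1 t * b.1⁻¹, ⟨(α' t)⁻¹, hζ⟩) with hatil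
  have hatilK : atil ∈ Subgroup.normalizer (HSL F α' : Set (SL2 F × ↥(rou (rNum F α')))) :=
    KSL_le_normalizer α' (Subgroup.mem_prod.mpr ⟨mem_borel.mpr hcomp1, trivial⟩)
  have hatilb : atil * b ∈ dcoset (HSL F α') b := by
    refine ⟨1, one_mem _, (hMat b.1 t, ⟨(α' t)⁻¹, hζ⟩), ?_, ?_⟩
    · refine (mem_radH_iff _ _ _ _).mpr ⟨mem_borel.mpr rfl, ?_⟩
      show borelSLChar F α' ⟨hMat b.1 t, mem_borel.mpr rfl⟩ * (α' t)⁻¹ = 1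
      rw [char_apply α' _ t rfl]
      simp
    · refine Prod.ext ?_ ?_
      · show (b.1 * hMat b.1 t * b.1⁻¹) * b.1 = 1 * b.1 * hMat b.1 t
        group
      · apply Subtype.ext
        show (α' t)⁻¹ * (b.2 : ℂˣ) = 1 * (b.2 : ℂˣ) * (α' t)⁻¹
        rw [one_mul, mul_comm]
  have hatilH := hb6 atil hatilK hatilb
  obtain ⟨hm, heqv⟩ := (mem_radH_iff _ _ _ _).mp hatilH
  have hch : borelSLChar F α' ⟨(b.1 * hMat b.1 t * b.1⁻¹ : SL2 F), hm⟩ = α' t⁻¹ := by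
    refine char_apply α' _ _ ?_
    rw [Units.val_inv_eq_inv_val]
    exact hcomp0
  rw [hch, map_inv] at heqv
  have h2 : α' t * α' t = 1 := by
    have h3 := congrArg (·⁻¹) heqv
    simpa [mul_inv_rev, hatil] using h3
  rw [sq]
  exact h2

end SLForward

/-- The radicalization of `(SL(2, F), G₀*, α'∘(A ↦ A₀₀))` is a Higman pair
iff `α'` is real-valued. -/
theorem stmt18 {F : Type*} [Field F] [Fintype F] (α' : Fˣ →* ℂˣ) :
    IsHigmanPair (radH (borelSL F) (borelSLChar F α')
        (2 * Nat.card (borelSLChar F α').range)) ↔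
      ∀ a : Fˣ, α' a ^ 2 = 1 := by
  constructor
  · intro h a
    exact forward α' h a
  · intro h
    exact backward α' h
end
end
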